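/- arXiv:1902.07529 — 6 statements merged into one kernel-verified Lean document; each statement's English description precedes it below -/
import Mathlib

section
/- Let n ≥ 1 and let C_1,…,C_n and Z_1,…,Z_n be finite nonempty types. Let p be a probability distribution on (C_1×⋯×C_n)×(Z_1×⋯×Z_n), interpreted as the joint law of outputs C = (C_1,…,C_n) and inputs Z = (Z_1,…,Z_n), and let α > 1. Assume the Markov (input non-signaling) condition: for every i and every past realization (c_{<i}, z_{<i}) of positive probability and every z_i with P(Z_{<i} = z_{<i}) > 0, one has P(Z_i = z_i | C_{<i} = c_{<i}, Z_{<i} = z_{<i}) = P(Z_i = z_i | Z_{<i} = z_{<i}). Assume further that for every i and every positive-probability history (c_{<i}, z_{<i}) there is a nonnegative function F_i(·,·; c_{<i}, z_{<i}) on C_i×Z_i satisfying the single-trial PEF inequality Σ_{(c_i,z_i)} F_i(c_i,z_i; c_{<i},z_{<i}) · P(C_i=c_i | Z_i=z_i, C_{<i}=c_{<i}, Z_{<i}=z_{<i})^{α−1} · P(C_i=c_i, Z_i=z_i | C_{<i}=c_{<i}, Z_{<i}=z_{<i}) ≤ 1, where the sum ranges over pairs for which the conditioning events have positive probability. Then the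 product is a PEF for the full sequence: Σ_{(c,z) : P(Z=z)>0} [∏_{i=1}^n F_i(c_i,z_i; c_{<i},z_{<i})] · P(C=c | Z=z)^{α−1} · P(C=c, Z=z) ≤ 1. -/
open scoped Classical

/-- The probability of an event `E` under the finitely supported distribution `p`. -/
noncomputable def prOf {Ω : Type*} [Fintype Ω] (p : Ω → ℝ) (E : Ω → Prop) : ℝ :=
  ∑ ω, if E ω then p ω else 0

/-!
Write `p(c, z) = ∏ᵢ P(cᵢ, zᵢ | c_{<i}, z_{<i})` and `P(z) = ∏ᵢ P(zᵢ | z_{<i})`. The Markov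
condition replaces each factor of `P(z)` by `P(zᵢ | c_{<i}, z_{<i})`, so
`p(c | z) = ∏ᵢ P(cᵢ | zᵢ, c_{<i}, z_{<i})`. Hence the PEF summand of the first `i + 1` trials is
the single-trial summand of trial `i` times the PEF summand of the first `i` trials, and the
single-trial inequalities remove the trials one at a time, from last to first.
-/

open Finset Function

section prOf

variable {Ω : Type*} [Fintype Ω] {p : Ω → ℝ} {E E' : Ω → Prop}

theorem prOf_nonneg (hp0 : ∀ ω, 0 ≤ p ω) (E : Ω → Prop) : 0 ≤ prOf p E :=
  sum_nonneg fun ω _ => by split_ifs <;> simp [hp0 ω]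

theorem prOf_congr (h : ∀ ω, E ω ↔ E' ω) : prOf p E = prOf p E' :=
  sum_congr rfl fun ω _ => if_congr (h ω) rfl rfl

theorem prOf_mono (hp0 : ∀ ω, 0 ≤ p ω) (h : ∀ ω, E ω → E' ω) : prOf p E ≤ prOf p E' :=
  sum_le_sum fun ω _ => by
    by_cases hE : E ω
    · simp [hE, h ω hE]
    · by_cases hE' : E' ω <;> simp [hE, hE', hp0 ω]

theorem prOf_eq_one (hp1 : ∑ ω, p ω = 1) (h : ∀ ω, E ω) : prOf p E = 1 := by
  simpa [prOf, h] using hp1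

theorem prOf_eq_apply (ω₀ : Ω) : prOf p (· = ω₀) = p ω₀ := by
  simp [prOf]

end prOf

/-- Each `x` arises exactly `|β i|` times as `update y i b`, via the involution
`(b, y) ↦ (y i, update y i b)`. -/
theorem Fintype.sum_sum_update {ι : Type*} [Fintype ι] [DecidableEq ι] {β : ι → Type*}
    [∀ j, Fintype (β j)] (i : ι) (f : (∀ j, β j) → ℝ) :
    ∑ b : β i, ∑ y, f (update y i b) = Fintype.card (β i) * ∑ x, f x := by
  have hinv : Involutive fun q : β i × (∀ j, β j) => (q.2 i, update q.2 i q.1) := by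
    rintro ⟨b, y⟩
    simp
  calc ∑ b : β i, ∑ y, f (update y i b)
      = ∑ q : β i × (∀ j, β j), f (update q.2 i q.1) := by rw [Fintype.sum_prod_type]
    _ = ∑ q : β i × (∀ j, β j), f q.2 := Fintype.sum_equiv hinv.toPerm _ _ fun _ => rfl
    _ = Fintype.card (β i) * ∑ x, f x := by simp [Fintype.sum_prod_type, sum_const]

section prefixProd

variable {M : Type*} [CommMonoid M] {n : ℕ}

def prefixProd (k : ℕ) (f : Fin n → M) : M :=
  ∏ j : Fin n, if (j : ℕ) < k then f j else 1

theorem prefixProd_zero (f : Fin n → M) : prefixProd 0 f = 1 := by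
  simp [prefixProd]

theorem prefixProd_succ (f : Fin n → M) (i : Fin n) :
    prefixProd (i + 1) f = f i * prefixProd i f := by
  have h : ∀ j : Fin n, (if (j : ℕ) < i + 1 then f j else 1)
      = (if j = i then f j else 1) * (if (j : ℕ) < i then f j else 1) := by
    intro j
    rcases lt_trichotomy (j : ℕ) i with h | h | h
    · simp [h, Nat.lt_succ_of_lt h, Fin.ne_of_val_ne h.ne]
    · simp [Fin.ext h]
    · simp [h.not_gt, Fin.ne_of_val_ne h.ne', Nat.not_lt.2 (Nat.succ_le_of_lt h)]
  simp only [prefixProd, h, prod_mul_distrib, prod_ite_eq', mem_univ, if_true]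

theorem prefixProd_congr {k : ℕ} {f g : Fin n → M}
    (h : ∀ j : Fin n, (j : ℕ) < k → f j = g j) : prefixProd k f = prefixProd k g :=
  prod_congr rfl fun j _ => by split_ifs with hj; exacts [h j hj, rfl]

theorem prefixProd_self (f : Fin n → M) : prefixProd n f = ∏ j, f j := by
  simp [prefixProd]

theorem prefixProd_nonneg {R : Type*} [CommMonoidWithZero R] [Preorder R] [ZeroLEOneClass R]
    [PosMulMono R] {f : Fin n → R} (hf : ∀ j, 0 ≤ f j) (k : ℕ) : 0 ≤ prefixProd k f :=
  prod_nonneg fun j _ => by split_ifs <;> simp [hf j]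

end prefixProd

theorem update_restrict_lt {ι : Type*} [Preorder ι] [DecidableEq ι] {β : ι → Sort*}
    (x : ∀ j, β j) (i : ι) (a : β i) :
    (fun j (_ : j < i) => update x i a j) = fun j _ => x j :=
  funext₂ fun _ hj => update_of_ne hj.ne _ _

theorem rpow_div_eq_of_div_eq {A B A' B' D : ℝ} (β : ℝ) (hA : 0 < A) (hB : 0 < B)
    (hD : 0 < D) (hA' : 0 ≤ A') (h : D / A = B' / B) :
    (A' / B') ^ β = (A' / D) ^ β * (A / B) ^ β := by
  have hB' : B' = D * B / A := by
    rw [div_eq_div_iff hA.ne' hB.ne'] at h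
    field_simp
    linarith
  rw [← Real.mul_rpow (div_nonneg hA' hD.le) (div_nonneg hA.le hB.le), hB']
  congr 1
  field_simp

theorem Fintype.card_mul_card_mul_sum_mul_le {ι : Type*} [Fintype ι] [DecidableEq ι]
    {β γ : ι → Type*} [∀ j, Fintype (β j)] [∀ j, Fintype (γ j)] (i : ι)
    {f g : (∀ j, β j) → (∀ j, γ j) → ℝ} (hg0 : ∀ x y, 0 ≤ g x y)
    (hg : ∀ x y a b, g (update x i a) (update y i b) = g x y)
    (hf : ∀ x y, g x y ≠ 0 → ∑ a, ∑ b, f (update x i a) (update y i b) ≤ 1) :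
    Fintype.card (β i) * Fintype.card (γ i) * ∑ x, ∑ y, f x y * g x y ≤
      ∑ x, ∑ y, g x y := by
  have hcount : ∀ h : (∀ j, β j) → (∀ j, γ j) → ℝ,
      ∑ a, ∑ x, ∑ b, ∑ y, h (update x i a) (update y i b)
        = Fintype.card (β i) * Fintype.card (γ i) * ∑ x, ∑ y, h x y := by
    intro h
    calc ∑ a, ∑ x, ∑ b, ∑ y, h (update x i a) (update y i b)
        = ∑ a, ∑ x, Fintype.card (γ i) * ∑ y, h (update x i a) y :=
          Finset.sum_congr rfl fun a _ => Finset.sum_congr rfl fun x _ =>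
            Fintype.sum_sum_update i (h (update x i a))
      _ = Fintype.card (γ i) * ∑ a, ∑ x, ∑ y, h (update x i a) y := by simp_rw [← mul_sum]
      _ = _ := by rw [Fintype.sum_sum_update i fun x => ∑ y, h x y]; ring
  have hsplit : Fintype.card (β i) * Fintype.card (γ i) * ∑ x, ∑ y, f x y * g x y
      = ∑ x, ∑ y, (∑ a, ∑ b, f (update x i a) (update y i b)) * g x y := by
    rw [← hcount]
    simp_rw [hg, sum_mul]
    calc ∑ a, ∑ x, ∑ b, ∑ y, f (update x i a) (update y i b) * g x y
        = ∑ x, ∑ a, ∑ y, ∑ b, f (update x i a) (update y i b) * g x y := by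
          rw [Finset.sum_comm]
          exact Finset.sum_congr rfl fun x _ => Finset.sum_congr rfl fun a _ => Finset.sum_comm
      _ = _ := Finset.sum_congr rfl fun x _ => Finset.sum_comm
  rw [hsplit]
  refine sum_le_sum fun x _ => sum_le_sum fun y _ => ?_
  by_cases hxy : g x y = 0
  · simp [hxy]
  · exact mul_le_of_le_one_left (hg0 x y) (hf x y hxy)

section Trials

variable {n : ℕ} {C Z : Fin n → Type*}

def AgreesBelow (k : ℕ) (c : ∀ i, C i) (z : ∀ i, Z i) (ω : (∀ i, C i) × (∀ i, Z i)) :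
    Prop :=
  ∀ j : Fin n, (j : ℕ) < k → ω.1 j = c j ∧ ω.2 j = z j

def InputsAgreeBelow (k : ℕ) (z : ∀ i, Z i) (ω : (∀ i, C i) × (∀ i, Z i)) : Prop :=
  ∀ j : Fin n, (j : ℕ) < k → ω.2 j = z j

def HistoryIs (i : Fin n) (cpre : ∀ j, j < i → C j) (zpre : ∀ j, j < i → Z j)
    (ω : (∀ i, C i) × (∀ i, Z i)) : Prop :=
  ∀ j (h : j < i), ω.1 j = cpre j h ∧ ω.2 j = zpre j h

theorem agreesBelow_succ_iff {i : Fin n} {c : ∀ i, C i} {z : ∀ i, Z i}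
    {ω : (∀ i, C i) × (∀ i, Z i)} :
    AgreesBelow (i + 1) c z ω ↔ ω.1 i = c i ∧ ω.2 i = z i ∧ AgreesBelow i c z ω := by
  refine ⟨fun h => ⟨(h i i.val.lt_succ_self).1, (h i i.val.lt_succ_self).2,
    fun j hj => h j (Nat.lt_succ_of_lt hj)⟩, fun ⟨hc, hz, h⟩ j hj => ?_⟩
  rcases Nat.lt_succ_iff_lt_or_eq.1 hj with hj | hj
  · exact h j hj
  · obtain rfl := Fin.ext hj
    exact ⟨hc, hz⟩

theorem inputsAgreeBelow_succ_iff {i : Fin n} {z : ∀ i, Z i}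
    {ω : (∀ i, C i) × (∀ i, Z i)} :
    InputsAgreeBelow (i + 1) z ω ↔ ω.2 i = z i ∧ InputsAgreeBelow i z ω := by
  refine ⟨fun h => ⟨h i i.val.lt_succ_self, fun j hj => h j (Nat.lt_succ_of_lt hj)⟩,
    fun ⟨hz, h⟩ j hj => ?_⟩
  rcases Nat.lt_succ_iff_lt_or_eq.1 hj with hj | hj
  · exact h j hj
  · obtain rfl := Fin.ext hj
    exact hz

theorem agreesBelow_self_iff {c : ∀ i, C i} {z : ∀ i, Z i} {ω : (∀ i, C i) × (∀ i, Z i)} :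
    AgreesBelow n c z ω ↔ ω = (c, z) := by
  simp [AgreesBelow, Prod.ext_iff, funext_iff, forall_and]

theorem inputsAgreeBelow_self_iff {z : ∀ i, Z i} {ω : (∀ i, C i) × (∀ i, Z i)} :
    InputsAgreeBelow n z ω ↔ ω.2 = z := by
  simp [InputsAgreeBelow, funext_iff]

variable [∀ i, Fintype (C i)] [∀ i, Fintype (Z i)] (p : (∀ i, C i) × (∀ i, Z i) → ℝ)
  (α : ℝ) (F : ∀ i : Fin n, C i → Z i → (∀ j, j < i → C j) → (∀ j, j < i → Z j) → ℝ)

noncomputable def trialTerm (i : Fin n) (ci : C i) (zi : Z i) (cpre : ∀ j, j < i → C j)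
    (zpre : ∀ j, j < i → Z j) : ℝ :=
  if 0 < prOf p (fun ω => ω.2 i = zi ∧ HistoryIs i cpre zpre ω) then
    F i ci zi cpre zpre *
      (prOf p (fun ω => ω.1 i = ci ∧ ω.2 i = zi ∧ HistoryIs i cpre zpre ω) /
        prOf p (fun ω => ω.2 i = zi ∧ HistoryIs i cpre zpre ω)) ^ (α - 1) *
      (prOf p (fun ω => ω.1 i = ci ∧ ω.2 i = zi ∧ HistoryIs i cpre zpre ω) /
        prOf p (HistoryIs i cpre zpre))
  else 0

def IsPEFGivenHistory : Prop :=
  ∀ i cpre zpre, 0 < prOf p (HistoryIs i cpre zpre) →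
    ∑ ci, ∑ zi, trialTerm p α F i ci zi cpre zpre ≤ 1

def IsInputMarkov : Prop :=
  ∀ (i : Fin n) cpre zpre (zi : Z i), 0 < prOf p (HistoryIs i cpre zpre) →
    0 < prOf p (fun ω => ∀ j (h : j < i), ω.2 j = zpre j h) →
    prOf p (fun ω => ω.2 i = zi ∧ HistoryIs i cpre zpre ω) / prOf p (HistoryIs i cpre zpre) =
      prOf p (fun ω => ω.2 i = zi ∧ ∀ j (h : j < i), ω.2 j = zpre j h) /
        prOf p (fun ω => ∀ j (h : j < i), ω.2 j = zpre j h)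

def factorAlong (c : ∀ i, C i) (z : ∀ i, Z i) (i : Fin n) : ℝ :=
  F i (c i) (z i) (fun j _ => c j) (fun j _ => z j)

/-- The PEF summand of the first `k` trials at the length-`k` history of the record `(c, z)`.
Indexing by whole records avoids types of histories of each length; in `∑ c, ∑ z` a history of
length `k` is then counted `∏_{j ≥ k} |C j| |Z j|` times. -/
noncomputable def prefixTerm (k : ℕ) (c : ∀ i, C i) (z : ∀ i, Z i) : ℝ :=
  if 0 < prOf p (InputsAgreeBelow k z) then
    prefixProd k (factorAlong F c z) *
      (prOf p (AgreesBelow k c z) / prOf p (InputsAgreeBelow k z)) ^ (α - 1) *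
      prOf p (AgreesBelow k c z)
  else 0

variable {p α F}

theorem trialTerm_nonneg (hp0 : ∀ ω, 0 ≤ p ω)
    (hF0 : ∀ i ci zi cpre zpre, 0 ≤ F i ci zi cpre zpre) (i : Fin n) (ci : C i) (zi : Z i)
    (cpre : ∀ j, j < i → C j) (zpre : ∀ j, j < i → Z j) :
    0 ≤ trialTerm p α F i ci zi cpre zpre := by
  unfold trialTerm
  split_ifs
  · exact mul_nonneg (mul_nonneg (hF0 _ _ _ _ _)
      (Real.rpow_nonneg (div_nonneg (prOf_nonneg hp0 _) (prOf_nonneg hp0 _)) _))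
      (div_nonneg (prOf_nonneg hp0 _) (prOf_nonneg hp0 _))
  · exact le_rfl

theorem prefixTerm_nonneg (hp0 : ∀ ω, 0 ≤ p ω)
    (hF0 : ∀ i ci zi cpre zpre, 0 ≤ F i ci zi cpre zpre) (k : ℕ) (c : ∀ i, C i)
    (z : ∀ i, Z i) : 0 ≤ prefixTerm p α F k c z := by
  unfold prefixTerm
  split_ifs
  · exact mul_nonneg (mul_nonneg (prefixProd_nonneg (fun j => hF0 _ _ _ _ _) k)
      (Real.rpow_nonneg (div_nonneg (prOf_nonneg hp0 _) (prOf_nonneg hp0 _)) _))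
      (prOf_nonneg hp0 _)
  · exact le_rfl

theorem prefixTerm_eq_zero {k : ℕ} {c : ∀ i, C i} {z : ∀ i, Z i}
    (h : prOf p (AgreesBelow k c z) = 0) : prefixTerm p α F k c z = 0 := by
  simp [prefixTerm, h]

theorem prefixTerm_congr {k : ℕ} {c c' : ∀ i, C i} {z z' : ∀ i, Z i}
    (h : ∀ j : Fin n, (j : ℕ) < k → c j = c' j ∧ z j = z' j) :
    prefixTerm p α F k c z = prefixTerm p α F k c' z' := by
  have hagree : ∀ ω, AgreesBelow k c z ω ↔ AgreesBelow k c' z' ω := fun ω =>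
    forall₂_congr fun j hj => by rw [(h j hj).1, (h j hj).2]
  have hinputs : ∀ ω : (∀ i, C i) × (∀ i, Z i),
      InputsAgreeBelow k z ω ↔ InputsAgreeBelow k z' ω := fun ω =>
    forall₂_congr fun j hj => by rw [(h j hj).2]
  have hfactor : prefixProd k (factorAlong F c z) = prefixProd k (factorAlong F c' z') :=
    prefixProd_congr fun j hj => by
      have hpre : ∀ j' : Fin n, j' < j → c j' = c' j' ∧ z j' = z' j' :=
        fun j' hj' => h j' (lt_trans hj' hj)
      simp only [factorAlong, (h j hj).1, (h j hj).2]
      congr 1 <;> funext j' hj' <;> simp [hpre j' hj']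
  unfold prefixTerm
  rw [prOf_congr hagree, prOf_congr hinputs, hfactor]

theorem prefixTerm_update (i : Fin n) (c : ∀ i, C i) (z : ∀ i, Z i) (a : C i) (b : Z i) :
    prefixTerm p α F i (update c i a) (update z i b) = prefixTerm p α F i c z :=
  prefixTerm_congr fun _ hj =>
    ⟨update_of_ne (Fin.ne_of_val_ne hj.ne) _ _, update_of_ne (Fin.ne_of_val_ne hj.ne) _ _⟩

theorem prefixTerm_succ (hp0 : ∀ ω, 0 ≤ p ω) (hM : IsInputMarkov p) {i : Fin n}
    {c : ∀ i, C i} {z : ∀ i, Z i} (hpos : 0 < prOf p (AgreesBelow (i + 1) c z)) :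
    prefixTerm p α F (i + 1) c z =
      trialTerm p α F i (c i) (z i) (fun j _ => c j) (fun j _ => z j) *
        prefixTerm p α F i c z := by
  have hA' : prOf p (AgreesBelow (i + 1) c z) =
      prOf p (fun ω => ω.1 i = c i ∧ ω.2 i = z i ∧ AgreesBelow i c z ω) :=
    prOf_congr fun _ => agreesBelow_succ_iff
  have hB' : prOf p (InputsAgreeBelow (i + 1) z) =
      prOf p (fun ω => ω.2 i = z i ∧ InputsAgreeBelow i z ω) :=
    prOf_congr fun _ => inputsAgreeBelow_succ_iff
  have hA : 0 < prOf p (AgreesBelow i c z) :=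
    hpos.trans_le (prOf_mono hp0 fun ω h j hj => h j (Nat.lt_succ_of_lt hj))
  have hB : 0 < prOf p (InputsAgreeBelow i z) :=
    hA.trans_le (prOf_mono hp0 fun ω h j hj => (h j hj).2)
  have hD : 0 < prOf p (fun ω => ω.2 i = z i ∧ AgreesBelow i c z ω) :=
    hpos.trans_le (by rw [hA']; exact prOf_mono hp0 fun ω h => h.2)
  have hB'pos : 0 < prOf p (InputsAgreeBelow (i + 1) z) :=
    hpos.trans_le (prOf_mono hp0 fun ω h j hj => (h j hj).2)
  have hMarkov :
      prOf p (fun ω => ω.2 i = z i ∧ AgreesBelow i c z ω) / prOf p (AgreesBelow i c z)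
      = prOf p (InputsAgreeBelow (i + 1) z) / prOf p (InputsAgreeBelow i z) := by
    rw [hB']; exact hM i (fun j _ => c j) (fun j _ => z j) (z i) hA hB
  have hhist : HistoryIs i (fun j _ => c j) (fun j _ => z j) = AgreesBelow i c z := rfl
  unfold prefixTerm trialTerm factorAlong
  rw [hhist, if_pos hB'pos, if_pos hB, if_pos hD, prefixProd_succ, ← hA',
    rpow_div_eq_of_div_eq (α - 1) hA hB hD hpos.le hMarkov]
  field_simp

theorem prefixTerm_succ_le (hp0 : ∀ ω, 0 ≤ p ω)
    (hF0 : ∀ i ci zi cpre zpre, 0 ≤ F i ci zi cpre zpre) (hM : IsInputMarkov p) (i : Fin n)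
    (c : ∀ i, C i) (z : ∀ i, Z i) :
    prefixTerm p α F (i + 1) c z ≤
      trialTerm p α F i (c i) (z i) (fun j _ => c j) (fun j _ => z j) *
        prefixTerm p α F i c z := by
  by_cases hpos : 0 < prOf p (AgreesBelow (i + 1) c z)
  · exact (prefixTerm_succ hp0 hM hpos).le
  · rw [prefixTerm_eq_zero (le_antisymm (not_lt.1 hpos) (prOf_nonneg hp0 _))]
    exact mul_nonneg (trialTerm_nonneg hp0 hF0 _ _ _ _ _) (prefixTerm_nonneg hp0 hF0 _ _ _)

theorem card_mul_card_mul_sum_prefixTerm_succ_le (hp0 : ∀ ω, 0 ≤ p ω)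
    (hF0 : ∀ i ci zi cpre zpre, 0 ≤ F i ci zi cpre zpre) (hM : IsInputMarkov p)
    (hF : IsPEFGivenHistory p α F) (i : Fin n) :
    (Fintype.card (C i) * Fintype.card (Z i) : ℝ) *
        ∑ c, ∑ z, prefixTerm p α F (i + 1) c z ≤ ∑ c, ∑ z, prefixTerm p α F i c z := by
  have hhistory : ∀ c z, prefixTerm p α F i c z ≠ 0 → 0 < prOf p (AgreesBelow i c z) :=
    fun c z hne => (prOf_nonneg hp0 _).lt_of_ne' fun h0 => hne (prefixTerm_eq_zero h0)
  calc (Fintype.card (C i) * Fintype.card (Z i) : ℝ) *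
        ∑ c, ∑ z, prefixTerm p α F (i + 1) c z
      ≤ Fintype.card (C i) * Fintype.card (Z i) * ∑ c, ∑ z,
          trialTerm p α F i (c i) (z i) (fun j _ => c j) (fun j _ => z j) *
            prefixTerm p α F i c z := by
        gcongr with c _ z _
        exact prefixTerm_succ_le hp0 hF0 hM i c z
    _ ≤ ∑ c, ∑ z, prefixTerm p α F i c z :=
        Fintype.card_mul_card_mul_sum_mul_le i (prefixTerm_nonneg hp0 hF0 i)
          (prefixTerm_update i) fun c z hne => by
            simpa only [update_self, update_restrict_lt] using hF i _ _ (hhistory c z hne)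

theorem prefixProd_card_mul_sum_prefixTerm_le (hp0 : ∀ ω, 0 ≤ p ω)
    (hF0 : ∀ i ci zi cpre zpre, 0 ≤ F i ci zi cpre zpre) (hM : IsInputMarkov p)
    (hF : IsPEFGivenHistory p α F) {k : ℕ} (hk : k ≤ n) :
    prefixProd k (fun j => (Fintype.card (C j) * Fintype.card (Z j) : ℝ)) *
        ∑ c, ∑ z, prefixTerm p α F k c z ≤ ∑ c, ∑ z, prefixTerm p α F 0 c z := by
  induction k with
  | zero => rw [prefixProd_zero, one_mul]
  | succ k ih =>
    let i : Fin n := ⟨k, hk⟩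
    calc prefixProd (i + 1) (fun j => (Fintype.card (C j) * Fintype.card (Z j) : ℝ)) *
          ∑ c, ∑ z, prefixTerm p α F (i + 1) c z
        = prefixProd i (fun j => (Fintype.card (C j) * Fintype.card (Z j) : ℝ)) *
            ((Fintype.card (C i) * Fintype.card (Z i) : ℝ) *
              ∑ c, ∑ z, prefixTerm p α F (i + 1) c z) := by
          rw [prefixProd_succ]; ring
      _ ≤ prefixProd k (fun j => (Fintype.card (C j) * Fintype.card (Z j) : ℝ)) *
            ∑ c, ∑ z, prefixTerm p α F k c z :=
          mul_le_mul_of_nonneg_left (card_mul_card_mul_sum_prefixTerm_succ_le hp0 hF0 hM hF i)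
            (prefixProd_nonneg (fun j => by positivity) _)
      _ ≤ _ := ih (Nat.le_of_succ_le hk)

theorem sum_prefixTerm_zero (hp1 : ∑ ω, p ω = 1) :
    ∑ c, ∑ z, prefixTerm p α F 0 c z =
      prefixProd n (fun j => (Fintype.card (C j) * Fintype.card (Z j) : ℝ)) := by
  have hone : ∀ c z, prefixTerm p α F 0 c z = 1 := fun c z => by
    have hA : prOf p (AgreesBelow 0 c z) = 1 :=
      prOf_eq_one hp1 fun _ _ h => (Nat.not_lt_zero _ h).elim
    have hB : prOf p (InputsAgreeBelow 0 z) = 1 :=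
      prOf_eq_one hp1 fun _ _ h => (Nat.not_lt_zero _ h).elim
    simp [prefixTerm, hA, hB, prefixProd_zero]
  simp [hone, prefixProd_self, Fintype.card_pi, prod_mul_distrib]

theorem prefixTerm_self (c : ∀ i, C i) (z : ∀ i, Z i) :
    prefixTerm p α F n c z =
      if 0 < prOf p (fun ω => ω.2 = z) then
        (∏ i, F i (c i) (z i) (fun j _ => c j) (fun j _ => z j)) *
          (p (c, z) / prOf p (fun ω => ω.2 = z)) ^ (α - 1) * p (c, z)
      else 0 := by
  rw [prefixTerm, prOf_congr fun _ => agreesBelow_self_iff,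
    prOf_congr fun _ => inputsAgreeBelow_self_iff, prOf_eq_apply, prefixProd_self]
  rfl

end Trials

theorem pef_chaining_general
    {n : ℕ}
    (C Z : Fin n → Type*)
    [∀ i, Fintype (C i)] [∀ i, Nonempty (C i)]
    [∀ i, Fintype (Z i)] [∀ i, Nonempty (Z i)]
    (p : ((∀ i, C i) × (∀ i, Z i)) → ℝ)
    (hp0 : ∀ ω, 0 ≤ p ω) (hp1 : ∑ ω, p ω = 1)
    (α : ℝ)
    (hMarkov : ∀ (i : Fin n) (cpre : ∀ j : Fin n, j < i → C j)
        (zpre : ∀ j : Fin n, j < i → Z j) (zi : Z i),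
      0 < prOf p (fun ω => ∀ j (h : j < i), ω.1 j = cpre j h ∧ ω.2 j = zpre j h) →
      0 < prOf p (fun ω => ∀ j (h : j < i), ω.2 j = zpre j h) →
      prOf p (fun ω => ω.2 i = zi ∧ ∀ j (h : j < i), ω.1 j = cpre j h ∧ ω.2 j = zpre j h) /
          prOf p (fun ω => ∀ j (h : j < i), ω.1 j = cpre j h ∧ ω.2 j = zpre j h) =
        prOf p (fun ω => ω.2 i = zi ∧ ∀ j (h : j < i), ω.2 j = zpre j h) /
          prOf p (fun ω => ∀ j (h : j < i), ω.2 j = zpre j h))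
    (F : ∀ i : Fin n, C i → Z i →
      (∀ j : Fin n, j < i → C j) → (∀ j : Fin n, j < i → Z j) → ℝ)
    (hF0 : ∀ i ci zi cpre zpre, 0 ≤ F i ci zi cpre zpre)
    (hF : ∀ (i : Fin n) (cpre : ∀ j : Fin n, j < i → C j)
        (zpre : ∀ j : Fin n, j < i → Z j),
      0 < prOf p (fun ω => ∀ j (h : j < i), ω.1 j = cpre j h ∧ ω.2 j = zpre j h) →
      ∑ ci : C i, ∑ zi : Z i,
        (if 0 < prOf p (fun ω => ω.2 i = zi ∧
              ∀ j (h : j < i), ω.1 j = cpre j h ∧ ω.2 j = zpre j h) then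
          F i ci zi cpre zpre *
            (prOf p (fun ω => ω.1 i = ci ∧ ω.2 i = zi ∧
                ∀ j (h : j < i), ω.1 j = cpre j h ∧ ω.2 j = zpre j h) /
              prOf p (fun ω => ω.2 i = zi ∧
                ∀ j (h : j < i), ω.1 j = cpre j h ∧ ω.2 j = zpre j h)) ^ (α - 1) *
            (prOf p (fun ω => ω.1 i = ci ∧ ω.2 i = zi ∧
                ∀ j (h : j < i), ω.1 j = cpre j h ∧ ω.2 j = zpre j h) /
              prOf p (fun ω => ∀ j (h : j < i), ω.1 j = cpre j h ∧ ω.2 j = zpre j h))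
        else 0) ≤ 1) :
    ∑ c : ∀ i, C i, ∑ z : ∀ i, Z i,
      (if 0 < prOf p (fun ω => ω.2 = z) then
        (∏ i, F i (c i) (z i) (fun j _ => c j) (fun j _ => z j)) *
          (p (c, z) / prOf p (fun ω => ω.2 = z)) ^ (α - 1) * p (c, z)
      else 0) ≤ 1 := by
  have hchain := prefixProd_card_mul_sum_prefixTerm_le hp0 hF0 hMarkov hF (le_refl n)
  rw [sum_prefixTerm_zero hp1] at hchain
  have hpos : 0 < prefixProd n (fun j => (Fintype.card (C j) * Fintype.card (Z j) : ℝ)) := by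
    rw [prefixProd_self]
    exact prod_pos fun j _ => by positivity
  simp_rw [← prefixTerm_self]
  exact le_of_mul_le_mul_left (by rwa [mul_one]) hpos

/-- Chaining of probability estimation factors (classical analog of Theorem 4.12 of
Knill–Zhang–Bierhorst).  `p` is the joint law of the outputs `C = (C₁, …, Cₙ)` and
inputs `Z = (Z₁, …, Zₙ)` of `n` trials.  Under the Markov (input non-signaling)
condition `P(Zᵢ = zᵢ | C_{<i} = c_{<i}, Z_{<i} = z_{<i}) = P(Zᵢ = zᵢ | Z_{<i} = z_{<i})`,
if for every positive-probability history the nonnegative function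
`F i · · c_{<i} z_{<i}` satisfies the single-trial PEF inequality with power `α > 1`,
then the product `∏ i, F i (cᵢ) (zᵢ) (c_{<i}) (z_{<i})` is a PEF with power `α` for the
full sequence. -/
theorem pef_chaining
    {n : ℕ} (hn : 1 ≤ n)
    (C Z : Fin n → Type*)
    [∀ i, Fintype (C i)] [∀ i, Nonempty (C i)]
    [∀ i, Fintype (Z i)] [∀ i, Nonempty (Z i)]
    (p : ((∀ i, C i) × (∀ i, Z i)) → ℝ)
    (hp0 : ∀ ω, 0 ≤ p ω) (hp1 : ∑ ω, p ω = 1)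
    (α : ℝ) (hα : 1 < α)
    (hMarkov : ∀ (i : Fin n) (cpre : ∀ j : Fin n, j < i → C j)
        (zpre : ∀ j : Fin n, j < i → Z j) (zi : Z i),
      0 < prOf p (fun ω => ∀ j (h : j < i), ω.1 j = cpre j h ∧ ω.2 j = zpre j h) →
      0 < prOf p (fun ω => ∀ j (h : j < i), ω.2 j = zpre j h) →
      prOf p (fun ω => ω.2 i = zi ∧ ∀ j (h : j < i), ω.1 j = cpre j h ∧ ω.2 j = zpre j h) /
          prOf p (fun ω => ∀ j (h : j < i), ω.1 j = cpre j h ∧ ω.2 j = zpre j h) =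
        prOf p (fun ω => ω.2 i = zi ∧ ∀ j (h : j < i), ω.2 j = zpre j h) /
          prOf p (fun ω => ∀ j (h : j < i), ω.2 j = zpre j h))
    (F : ∀ i : Fin n, C i → Z i →
      (∀ j : Fin n, j < i → C j) → (∀ j : Fin n, j < i → Z j) → ℝ)
    (hF0 : ∀ i ci zi cpre zpre, 0 ≤ F i ci zi cpre zpre)
    (hF : ∀ (i : Fin n) (cpre : ∀ j : Fin n, j < i → C j)
        (zpre : ∀ j : Fin n, j < i → Z j),
      0 < prOf p (fun ω => ∀ j (h : j < i), ω.1 j = cpre j h ∧ ω.2 j = zpre j h) →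
      ∑ ci : C i, ∑ zi : Z i,
        (if 0 < prOf p (fun ω => ω.2 i = zi ∧
              ∀ j (h : j < i), ω.1 j = cpre j h ∧ ω.2 j = zpre j h) then
          F i ci zi cpre zpre *
            (prOf p (fun ω => ω.1 i = ci ∧ ω.2 i = zi ∧
                ∀ j (h : j < i), ω.1 j = cpre j h ∧ ω.2 j = zpre j h) /
              prOf p (fun ω => ω.2 i = zi ∧
                ∀ j (h : j < i), ω.1 j = cpre j h ∧ ω.2 j = zpre j h)) ^ (α - 1) *
            (prOf p (fun ω => ω.1 i = ci ∧ ω.2 i = zi ∧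
                ∀ j (h : j < i), ω.1 j = cpre j h ∧ ω.2 j = zpre j h) /
              prOf p (fun ω => ∀ j (h : j < i), ω.1 j = cpre j h ∧ ω.2 j = zpre j h))
        else 0) ≤ 1) :
    ∑ c : ∀ i, C i, ∑ z : ∀ i, Z i,
      (if 0 < prOf p (fun ω => ω.2 = z) then
        (∏ i, F i (c i) (z i) (fun j _ => c j) (fun j _ => z j)) *
          (p (c, z) / prOf p (fun ω => ω.2 = z)) ^ (α - 1) * p (c, z)
      else 0) ≤ 1 :=
  pef_chaining_general C Z p hp0 hp1 α hMarkov F hF0 hF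
end

section
/- Let C_1, Z_1, C_2, Z_2 be finite nonempty types, let p be a probability distribution on C_1×Z_1×C_2×Z_2 (the joint law of (C_1,Z_1,C_2,Z_2)), and let α > 1. Assume the Markov condition: for all (c_1,z_1) with P(C_1=c_1, Z_1=z_1) > 0 and all z_2, P(Z_2=z_2 | C_1=c_1, Z_1=z_1) = P(Z_2=z_2 | Z_1=z_1). Let F_1 : C_1×Z_1 → ℝ≥0 satisfy Σ_{(c_1,z_1): P(Z_1=z_1)>0} F_1(c_1,z_1)·P(C_1=c_1|Z_1=z_1)^{α−1}·P(C_1=c_1,Z_1=z_1) ≤ 1, and for every (c_1,z_1) of positive probability let F_2^{(c_1,z_1)} : C_2×Z_2 → ℝ≥0 satisfy Σ_{(c_2,z_2)} F_2^{(c_1,z_1)}(c_2,z_2)·P(C_2=c_2 | Z_2=z_2, C_1=c_1, Z_1=z_1)^{α−1}·P(C_2=c_2, Z_2=z_2 | C_1=c_1, Z_1=z_1) ≤ 1 (sums over terms whose conditioning events have positive probability). Then Σ_{(c_1,z_1,c_2,z_2): P(Z_1=z_1,Z_2=z_2)>0} F_1(c_1,z_1)·F_2^{(c_1,z_1)}(c_2,z_2)·P(C_1=c_1,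 C_2=c_2 | Z_1=z_1, Z_2=z_2)^{α−1}·P(C_1=c_1, Z_1=z_1, C_2=c_2, Z_2=z_2) ≤ 1. -/
open scoped Classical

open Finset

/-!
Fix a first-trial outcome `(c₁, z₁)` of positive probability. The Markov condition
`P(z₂ | c₁, z₁) = P(z₂ | z₁)` factors the joint conditional as
`P(c₁, c₂ | z₁, z₂) = P(c₁ | z₁) · P(c₂ | z₂, c₁, z₁)`, and `α - 1`-th powers respect this
product. Hence the joint PEF terms with this first-trial outcome sum to the first-trial PEF term
of `(c₁, z₁)` times the second-trial PEF sum for `F₂ c₁ z₁`, which is at most one. Summing over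
`(c₁, z₁)` leaves the first-trial PEF sum, again at most one.
-/

lemma mul_mul_rpow_div_div_mul {a b x m q s β : ℝ} (hx : 0 ≤ x) (hm : 0 < m) (hq : 0 ≤ q)
    (hs : 0 ≤ s) :
    a * b * (x / (s / m * q)) ^ β * x = a * (m / q) ^ β * m * (b * (x / s) ^ β * (x / m)) := by
  have hsplit : x / (s / m * q) = m / q * (x / s) := by
    simp only [div_eq_mul_inv, mul_inv, inv_inv]; ring
  rw [hsplit, Real.mul_rpow (div_nonneg hm.le hq) (div_nonneg hx hs)]
  field_simp

section TwoTrials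

variable {C₁ Z₁ C₂ Z₂ : Type*} [Fintype C₁] [Fintype C₂] [Fintype Z₂]
  {p : C₁ → Z₁ → C₂ → Z₂ → ℝ}

lemma joint_pef_term_eq_mul (hp0 : ∀ c₁ z₁ c₂ z₂, 0 ≤ p c₁ z₁ c₂ z₂) {c₁ : C₁} {z₁ : Z₁}
    (hm : 0 < ∑ c₂, ∑ z₂, p c₁ z₁ c₂ z₂) (c₂ : C₂) (z₂ : Z₂)
    (hMarkov : (∑ c₂, p c₁ z₁ c₂ z₂) / (∑ c₂, ∑ z₂', p c₁ z₁ c₂ z₂') =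
      (∑ c₁', ∑ c₂, p c₁' z₁ c₂ z₂) / (∑ c₁', ∑ c₂, ∑ z₂', p c₁' z₁ c₂ z₂'))
    (a b β : ℝ) :
    (if 0 < ∑ c₁', ∑ c₂', p c₁' z₁ c₂' z₂ then
      a * b * (p c₁ z₁ c₂ z₂ / ∑ c₁', ∑ c₂', p c₁' z₁ c₂' z₂) ^ β * p c₁ z₁ c₂ z₂
    else 0) =
      a * ((∑ c₂, ∑ z₂, p c₁ z₁ c₂ z₂) / ∑ c₁', ∑ c₂, ∑ z₂, p c₁' z₁ c₂ z₂) ^ β *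
          (∑ c₂, ∑ z₂, p c₁ z₁ c₂ z₂) *
        (if 0 < ∑ c₂', p c₁ z₁ c₂' z₂ then
          b * (p c₁ z₁ c₂ z₂ / ∑ c₂', p c₁ z₁ c₂' z₂) ^ β *
            (p c₁ z₁ c₂ z₂ / ∑ c₂', ∑ z₂', p c₁ z₁ c₂' z₂')
        else 0) := by
  rcases (hp0 c₁ z₁ c₂ z₂).eq_or_lt with hx | hx
  · simp [← hx]
  have hs : 0 < ∑ c₂', p c₁ z₁ c₂' z₂ :=
    sum_pos' (fun _ _ ↦ hp0 _ _ _ _) ⟨c₂, mem_univ _, hx⟩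
  have hq : 0 < ∑ c₁', ∑ c₂', p c₁' z₁ c₂' z₂ :=
    sum_pos' (fun _ _ ↦ sum_nonneg fun _ _ ↦ hp0 _ _ _ _) ⟨c₁, mem_univ _, hs⟩
  have hq₁ : 0 < ∑ c₁', ∑ c₂, ∑ z₂, p c₁' z₁ c₂ z₂ :=
    sum_pos' (fun _ _ ↦ sum_nonneg fun _ _ ↦ sum_nonneg fun _ _ ↦ hp0 _ _ _ _)
      ⟨c₁, mem_univ _, hm⟩
  rw [if_pos hq, if_pos hs, (div_eq_iff hq₁.ne').mp hMarkov.symm]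
  exact mul_mul_rpow_div_div_mul hx.le hm hq₁.le hs.le

lemma sum_joint_pef_term_le (hp0 : ∀ c₁ z₁ c₂ z₂, 0 ≤ p c₁ z₁ c₂ z₂) (c₁ : C₁) (z₁ : Z₁)
    (hMarkov : 0 < (∑ c₂, ∑ z₂, p c₁ z₁ c₂ z₂) → ∀ z₂,
      (∑ c₂, p c₁ z₁ c₂ z₂) / (∑ c₂, ∑ z₂', p c₁ z₁ c₂ z₂') =
        (∑ c₁', ∑ c₂, p c₁' z₁ c₂ z₂) / (∑ c₁', ∑ c₂, ∑ z₂', p c₁' z₁ c₂ z₂'))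
    (a : ℝ) (ha : 0 ≤ a) (b : C₂ × Z₂ → ℝ) (β : ℝ)
    (hb : 0 < (∑ c₂, ∑ z₂, p c₁ z₁ c₂ z₂) →
      ∑ c₂, ∑ z₂,
        (if 0 < ∑ c₂', p c₁ z₁ c₂' z₂ then
          b (c₂, z₂) * (p c₁ z₁ c₂ z₂ / ∑ c₂', p c₁ z₁ c₂' z₂) ^ β *
            (p c₁ z₁ c₂ z₂ / ∑ c₂', ∑ z₂', p c₁ z₁ c₂' z₂')
        else 0) ≤ 1) :
    ∑ c₂, ∑ z₂,
      (if 0 < ∑ c₁', ∑ c₂', p c₁' z₁ c₂' z₂ then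
        a * b (c₂, z₂) * (p c₁ z₁ c₂ z₂ / ∑ c₁', ∑ c₂', p c₁' z₁ c₂' z₂) ^ β * p c₁ z₁ c₂ z₂
      else 0) ≤
    (if 0 < ∑ c₁', ∑ c₂, ∑ z₂, p c₁' z₁ c₂ z₂ then
      a * ((∑ c₂, ∑ z₂, p c₁ z₁ c₂ z₂) / ∑ c₁', ∑ c₂, ∑ z₂, p c₁' z₁ c₂ z₂) ^ β *
        (∑ c₂, ∑ z₂, p c₁ z₁ c₂ z₂)
    else 0) := by
  rcases (sum_nonneg fun c₂ _ ↦ sum_nonneg fun z₂ _ ↦ hp0 c₁ z₁ c₂ z₂).eq_or_lt with hm | hm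
  · have hp : ∀ c₂ z₂, p c₁ z₁ c₂ z₂ = 0 := fun c₂ z₂ ↦
      (sum_eq_zero_iff_of_nonneg fun _ _ ↦ hp0 _ _ _ _).1
        ((sum_eq_zero_iff_of_nonneg fun _ _ ↦ sum_nonneg fun _ _ ↦ hp0 _ _ _ _).1 hm.symm c₂
          (mem_univ _)) z₂ (mem_univ _)
    simp [hp]
  have hq₁ : 0 < ∑ c₁', ∑ c₂, ∑ z₂, p c₁' z₁ c₂ z₂ :=
    sum_pos' (fun _ _ ↦ sum_nonneg fun _ _ ↦ sum_nonneg fun _ _ ↦ hp0 _ _ _ _)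
      ⟨c₁, mem_univ _, hm⟩
  rw [if_pos hq₁]
  set A := a * ((∑ c₂, ∑ z₂, p c₁ z₁ c₂ z₂) / ∑ c₁', ∑ c₂, ∑ z₂, p c₁' z₁ c₂ z₂) ^ β *
    (∑ c₂, ∑ z₂, p c₁ z₁ c₂ z₂)
  have hA0 : 0 ≤ A := by positivity
  calc _ = A * ∑ c₂, ∑ z₂,
          (if 0 < ∑ c₂', p c₁ z₁ c₂' z₂ then
            b (c₂, z₂) * (p c₁ z₁ c₂ z₂ / ∑ c₂', p c₁ z₁ c₂' z₂) ^ β *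
              (p c₁ z₁ c₂ z₂ / ∑ c₂', ∑ z₂', p c₁ z₁ c₂' z₂')
          else 0) := by
        simp_rw [mul_sum]
        exact sum_congr rfl fun c₂ _ ↦ sum_congr rfl fun z₂ _ ↦
          joint_pef_term_eq_mul hp0 hm c₂ z₂ (hMarkov hm z₂) a _ β
    _ ≤ A := mul_le_of_le_one_right hA0 (hb hm)

end TwoTrials

theorem pef_chaining_two_trials_general
    {C₁ Z₁ C₂ Z₂ : Type*} [Fintype C₁] [Fintype Z₁]
    [Fintype C₂] [Fintype Z₂]
    (p : C₁ → Z₁ → C₂ → Z₂ → ℝ)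
    (hp0 : ∀ c₁ z₁ c₂ z₂, 0 ≤ p c₁ z₁ c₂ z₂)
    (α : ℝ)
    (hMarkov : ∀ c₁ z₁, 0 < (∑ c₂, ∑ z₂, p c₁ z₁ c₂ z₂) → ∀ z₂,
      (∑ c₂, p c₁ z₁ c₂ z₂) / (∑ c₂, ∑ z₂', p c₁ z₁ c₂ z₂') =
        (∑ c₁', ∑ c₂, p c₁' z₁ c₂ z₂) / (∑ c₁', ∑ c₂, ∑ z₂', p c₁' z₁ c₂ z₂'))
    (F₁ : C₁ × Z₁ → ℝ) (hF₁0 : ∀ ω, 0 ≤ F₁ ω)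
    (hF₁ : ∑ c₁, ∑ z₁,
      (if 0 < ∑ c₁', ∑ c₂, ∑ z₂, p c₁' z₁ c₂ z₂ then
        F₁ (c₁, z₁) *
          ((∑ c₂, ∑ z₂, p c₁ z₁ c₂ z₂) / ∑ c₁', ∑ c₂, ∑ z₂, p c₁' z₁ c₂ z₂) ^ (α - 1) *
          (∑ c₂, ∑ z₂, p c₁ z₁ c₂ z₂)
      else 0) ≤ 1)
    (F₂ : C₁ → Z₁ → C₂ × Z₂ → ℝ)
    (hF₂ : ∀ c₁ z₁, 0 < (∑ c₂, ∑ z₂, p c₁ z₁ c₂ z₂) →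
      ∑ c₂, ∑ z₂,
        (if 0 < ∑ c₂', p c₁ z₁ c₂' z₂ then
          F₂ c₁ z₁ (c₂, z₂) *
            (p c₁ z₁ c₂ z₂ / ∑ c₂', p c₁ z₁ c₂' z₂) ^ (α - 1) *
            (p c₁ z₁ c₂ z₂ / ∑ c₂', ∑ z₂', p c₁ z₁ c₂' z₂')
        else 0) ≤ 1) :
    ∑ c₁, ∑ z₁, ∑ c₂, ∑ z₂,
      (if 0 < ∑ c₁', ∑ c₂', p c₁' z₁ c₂' z₂ then
        F₁ (c₁, z₁) * F₂ c₁ z₁ (c₂, z₂) *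
          (p c₁ z₁ c₂ z₂ / ∑ c₁', ∑ c₂', p c₁' z₁ c₂' z₂) ^ (α - 1) *
          p c₁ z₁ c₂ z₂
      else 0) ≤ 1 :=
  (sum_le_sum fun c₁ _ ↦ sum_le_sum fun z₁ _ ↦
    sum_joint_pef_term_le hp0 c₁ z₁ (hMarkov c₁ z₁) _ (hF₁0 _) (F₂ c₁ z₁) _ (hF₂ c₁ z₁)).trans hF₁

/-- Two-trial chaining of probability estimation factors (base case of the classical
chaining theorem).  Here `p c₁ z₁ c₂ z₂` is the joint law of `(C₁, Z₁, C₂, Z₂)`.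
Under the Markov condition `P(Z₂ = z₂ | C₁ = c₁, Z₁ = z₁) = P(Z₂ = z₂ | Z₁ = z₁)`
(for positive-probability `(c₁, z₁)`), if `F₁` is a PEF with power `α > 1` for the
first-trial marginal and, for each positive-probability `(c₁, z₁)`,
`F₂ c₁ z₁` is a PEF with power `α` for the second-trial conditional distribution,
then the product `F₁ · F₂` is a PEF with power `α` for the joint distribution. -/
theorem pef_chaining_two_trials
    {C₁ Z₁ C₂ Z₂ : Type*} [Fintype C₁] [Nonempty C₁] [Fintype Z₁] [Nonempty Z₁]
    [Fintype C₂] [Nonempty C₂] [Fintype Z₂] [Nonempty Z₂]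
    (p : C₁ → Z₁ → C₂ → Z₂ → ℝ)
    (hp0 : ∀ c₁ z₁ c₂ z₂, 0 ≤ p c₁ z₁ c₂ z₂)
    (hp1 : ∑ c₁, ∑ z₁, ∑ c₂, ∑ z₂, p c₁ z₁ c₂ z₂ = 1)
    (α : ℝ) (hα : 1 < α)
    (hMarkov : ∀ c₁ z₁, 0 < (∑ c₂, ∑ z₂, p c₁ z₁ c₂ z₂) → ∀ z₂,
      (∑ c₂, p c₁ z₁ c₂ z₂) / (∑ c₂, ∑ z₂', p c₁ z₁ c₂ z₂') =
        (∑ c₁', ∑ c₂, p c₁' z₁ c₂ z₂) / (∑ c₁', ∑ c₂, ∑ z₂', p c₁' z₁ c₂ z₂'))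
    (F₁ : C₁ × Z₁ → ℝ) (hF₁0 : ∀ ω, 0 ≤ F₁ ω)
    (hF₁ : ∑ c₁, ∑ z₁,
      (if 0 < ∑ c₁', ∑ c₂, ∑ z₂, p c₁' z₁ c₂ z₂ then
        F₁ (c₁, z₁) *
          ((∑ c₂, ∑ z₂, p c₁ z₁ c₂ z₂) / ∑ c₁', ∑ c₂, ∑ z₂, p c₁' z₁ c₂ z₂) ^ (α - 1) *
          (∑ c₂, ∑ z₂, p c₁ z₁ c₂ z₂)
      else 0) ≤ 1)
    (F₂ : C₁ → Z₁ → C₂ × Z₂ → ℝ) (hF₂0 : ∀ c₁ z₁ ω, 0 ≤ F₂ c₁ z₁ ω)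
    (hF₂ : ∀ c₁ z₁, 0 < (∑ c₂, ∑ z₂, p c₁ z₁ c₂ z₂) →
      ∑ c₂, ∑ z₂,
        (if 0 < ∑ c₂', p c₁ z₁ c₂' z₂ then
          F₂ c₁ z₁ (c₂, z₂) *
            (p c₁ z₁ c₂ z₂ / ∑ c₂', p c₁ z₁ c₂' z₂) ^ (α - 1) *
            (p c₁ z₁ c₂ z₂ / ∑ c₂', ∑ z₂', p c₁ z₁ c₂' z₂')
        else 0) ≤ 1) :
    ∑ c₁, ∑ z₁, ∑ c₂, ∑ z₂,
      (if 0 < ∑ c₁', ∑ c₂', p c₁' z₁ c₂' z₂ then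
        F₁ (c₁, z₁) * F₂ c₁ z₁ (c₂, z₂) *
          (p c₁ z₁ c₂ z₂ / ∑ c₁', ∑ c₂', p c₁' z₁ c₂' z₂) ^ (α - 1) *
          p c₁ z₁ c₂ z₂
      else 0) ≤ 1 :=
  pef_chaining_two_trials_general p hp0 α hMarkov F₁ hF₁0 hF₁ F₂ hF₂
end

section
/- Let C and Z be finite nonempty types, let p be a probability distribution on C×Z, let α > 1, and let F : C×Z → ℝ≥0 satisfy the PEF inequality Σ_{(c,z): p(z)>0} F(c,z)·p(c|z)^{α−1}·p(c,z) ≤ 1. Then for every ε ∈ (0,1] and every real h, the probability under p of the event { (c,z) : p(z) > 0, F(c,z) ≥ 2^{(α−1)h} and p(c|z) > ε^{−1/(α−1)}·2^{−h} } is at most ε. -/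
/-!
A Markov-type argument: on the event, the thresholds are chosen so that
`ε · F(c,z) · p(c|z)^(α-1) ≥ 1`. Hence the probability of each outcome in the event is at most
`ε` times its term in the PEF sum, and summing gives at most `ε · 1`.
-/

theorem one_le_mul_mul_rpow_of_le_of_le {b ε t h f r : ℝ} (hb : 0 < b) (hε : 0 < ε) (ht : 0 < t)
    (hf : b ^ (t * h) ≤ f) (hr : ε ^ (-(1 / t)) * b ^ (-h) ≤ r) :
    1 ≤ ε * (f * r ^ t) := by
  have hthreshold : (ε ^ (-(1 / t)) * b ^ (-h)) ^ t = ε⁻¹ * (b ^ (t * h))⁻¹ := by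
    rw [Real.mul_rpow (by positivity) (by positivity), ← Real.rpow_mul hε.le,
      ← Real.rpow_mul hb.le, neg_mul, one_div_mul_cancel ht.ne', Real.rpow_neg_one,
      neg_mul, Real.rpow_neg hb.le, mul_comm h t]
  have hrt : ε⁻¹ * (b ^ (t * h))⁻¹ ≤ r ^ t :=
    hthreshold ▸ Real.rpow_le_rpow (by positivity) hr ht.le
  calc 1 = ε * (b ^ (t * h) * (ε⁻¹ * (b ^ (t * h))⁻¹)) := by field_simp
    _ ≤ ε * (f * r ^ t) := by
      gcongr
      exact (Real.rpow_pos_of_pos hb _).le.trans hf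

theorem ite_le_mul_ite_rpow {b ε t h m f x : ℝ} (hb : 0 < b) (hε : 0 < ε) (ht : 0 < t)
    (hf : 0 ≤ f) (hx : 0 ≤ x) :
    (if 0 < m ∧ b ^ (t * h) ≤ f ∧ ε ^ (-(1 / t)) * b ^ (-h) < x / m then x else 0) ≤
      ε * (if 0 < m then f * (x / m) ^ t * x else 0) := by
  split_ifs with hevent hm
  · calc x = 1 * x := (one_mul x).symm
      _ ≤ ε * (f * (x / m) ^ t) * x := by
        gcongr
        exact one_le_mul_mul_rpow_of_le_of_le hb hε ht hevent.2.1 hevent.2.2.le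
      _ = ε * (f * (x / m) ^ t * x) := by ring
  · exact absurd hevent.1 hm
  · positivity
  · simp

theorem pef_certification_general {C Z : Type*} [Fintype C]
    [Fintype Z]
    (p : C × Z → ℝ) (hp0 : ∀ ω, 0 ≤ p ω)
    (α : ℝ) (hα : 1 < α)
    (F : C × Z → ℝ) (hF0 : ∀ ω, 0 ≤ F ω)
    (hF : ∑ c, ∑ z, (if 0 < ∑ c', p (c', z) then
        F (c, z) * (p (c, z) / ∑ c', p (c', z)) ^ (α - 1) * p (c, z) else 0) ≤ 1)
    (ε : ℝ) (hε0 : 0 < ε) (h : ℝ) :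
    ∑ c, ∑ z, (if (0 < ∑ c', p (c', z)) ∧ (2 : ℝ) ^ ((α - 1) * h) ≤ F (c, z) ∧
          ε ^ (-(1 / (α - 1))) * (2 : ℝ) ^ (-h) < p (c, z) / ∑ c', p (c', z)
        then p (c, z) else 0) ≤ ε := by
  calc _ ≤ ∑ c, ∑ z, ε * (if 0 < ∑ c', p (c', z) then
          F (c, z) * (p (c, z) / ∑ c', p (c', z)) ^ (α - 1) * p (c, z) else 0) :=
        Finset.sum_le_sum fun c _ ↦ Finset.sum_le_sum fun z _ ↦
          ite_le_mul_ite_rpow two_pos hε0 (sub_pos.mpr hα) (hF0 _) (hp0 _)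
    _ = ε * ∑ c, ∑ z, (if 0 < ∑ c', p (c', z) then
          F (c, z) * (p (c, z) / ∑ c', p (c', z)) ^ (α - 1) * p (c, z) else 0) := by
        simp only [Finset.mul_sum]
    _ ≤ ε := mul_le_of_le_one_right hε0.le hF

/-- Core randomness-certification bound for probability estimation factors against
classical side information: if `F` is a PEF with power `α > 1` for the distribution
`p` on `C × Z`, then for any `ε ∈ (0,1]` and any real `h`, the probability of the
event that `F(c,z) ≥ 2^((α-1)h)` while `p(c|z) > ε^(-1/(α-1)) · 2^(-h)` is at
most `ε`.  Here `p(c|z) = p(c,z) / p(z)` with `p(z) = ∑ c, p(c,z)`. -/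
theorem pef_certification {C Z : Type*} [Fintype C] [Nonempty C]
    [Fintype Z] [Nonempty Z]
    (p : C × Z → ℝ) (hp0 : ∀ ω, 0 ≤ p ω) (hp1 : ∑ ω, p ω = 1)
    (α : ℝ) (hα : 1 < α)
    (F : C × Z → ℝ) (hF0 : ∀ ω, 0 ≤ F ω)
    (hF : ∑ c, ∑ z, (if 0 < ∑ c', p (c', z) then
        F (c, z) * (p (c, z) / ∑ c', p (c', z)) ^ (α - 1) * p (c, z) else 0) ≤ 1)
    (ε : ℝ) (hε0 : 0 < ε) (hε1 : ε ≤ 1) (h : ℝ) :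
    ∑ c, ∑ z, (if (0 < ∑ c', p (c', z)) ∧ (2 : ℝ) ^ ((α - 1) * h) ≤ F (c, z) ∧
          ε ^ (-(1 / (α - 1))) * (2 : ℝ) ^ (-h) < p (c, z) / ∑ c', p (c', z)
        then p (c, z) else 0) ≤ ε :=
  pef_certification_general p hp0 α hα F hF0 hF ε hε0 h
end

section
/- Let C and Z be finite nonempty types, let p be a probability distribution on C×Z, let α > 1, and let F : C×Z → ℝ≥0 satisfy Σ_{(c,z): p(z)>0} F(c,z)·p(c|z)^{α−1}·p(c,z) ≤ 1. Let h be real, γ ∈ (0,1], ε ∈ (0,1], and let S ⊆ C×Z be an event with p(S) ≥ γ such that F(c,z) ≥ 2^{(α−1)h} for every (c,z) ∈ S. Then the conditional probability, given S, of the event { (c,z) : p(z) > 0 and p(c|z) > (εγ)^{−1/(α−1)}·2^{−h} } is at most ε. -/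
/-!
If `F` is a PEF with power `α`, then `F · p(c|z)^(α-1)` has `p`-expectation at most `1`. On the
part of the success event where `p(c|z)` exceeds the threshold `t`, this quantity is at least
`2^((α-1)h) · t^(α-1) = (εγ)⁻¹`, so by Markov's inequality that part has probability at most `εγ`;
dividing by `p(S) ≥ γ` gives the bound `ε`.
-/

open scoped Classical

theorem mul_prOf_le_sum {Ω : Type*} [Fintype Ω] {p g : Ω → ℝ} {E : Ω → Prop} {m : ℝ}
    (hg : ∀ ω, 0 ≤ g ω) (hE : ∀ ω, E ω → m * p ω ≤ g ω) :
    m * prOf p E ≤ ∑ ω, g ω := by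
  rw [prOf, Finset.mul_sum]
  refine Finset.sum_le_sum fun ω _ => ?_
  split_ifs with hω
  · exact hE ω hω
  · simpa using hg ω

section PEF

variable {C Z : Type*} [Fintype C]

noncomputable def marginal (p : C × Z → ℝ) (z : Z) : ℝ := ∑ c, p (c, z)

noncomputable def condProb (p : C × Z → ℝ) (ω : C × Z) : ℝ := p ω / marginal p ω.2

structure IsPEF [Fintype Z] (p : C × Z → ℝ) (α : ℝ) (F : C × Z → ℝ) : Prop where
  nonneg : ∀ ω, 0 ≤ F ω
  sum_le_one :
    ∑ ω, (if 0 < marginal p ω.2 then F ω * condProb p ω ^ (α - 1) * p ω else 0) ≤ 1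

theorem condProb_nonneg {p : C × Z → ℝ} (hp0 : ∀ ω, 0 ≤ p ω) (ω : C × Z) :
    0 ≤ condProb p ω :=
  div_nonneg (hp0 ω) (Finset.sum_nonneg fun c _ => hp0 (c, ω.2))

/-- Markov's inequality for the nonnegative variable `F · p(c|z)^(α-1)`, whose expectation the PEF
condition bounds by `1`. -/
theorem IsPEF.mul_prOf_condProb_gt_le_one [Fintype Z] {p : C × Z → ℝ} {α : ℝ} {F : C × Z → ℝ}
    (hF : IsPEF p α F) (hp0 : ∀ ω, 0 ≤ p ω) (hα : 1 ≤ α) {q t : ℝ} (ht : 0 ≤ t)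
    {S : C × Z → Prop} (hSF : ∀ ω, S ω → q ≤ F ω) :
    q * t ^ (α - 1) *
      prOf p (fun ω => 0 < marginal p ω.2 ∧ t < condProb p ω ∧ S ω) ≤ 1 := by
  refine (mul_prOf_le_sum (fun ω => ?_) fun ω ⟨hz, htω, hS⟩ => ?_).trans hF.sum_le_one
  · split_ifs
    · exact mul_nonneg (mul_nonneg (hF.nonneg ω) (Real.rpow_nonneg (condProb_nonneg hp0 ω) _))
        (hp0 ω)
    · exact le_rfl
  · rw [if_pos hz]
    have hpow : t ^ (α - 1) ≤ condProb p ω ^ (α - 1) :=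
      Real.rpow_le_rpow ht htω.le (by linarith)
    exact mul_le_mul_of_nonneg_right
      (mul_le_mul (hSF ω hS) hpow (Real.rpow_nonneg ht _) (hF.nonneg ω)) (hp0 ω)

end PEF

/-- Where the threshold `(εγ)^(-1/(α-1)) 2^(-h)` of the theorem comes from. -/
theorem rpow_mul_mul_threshold_rpow {b x β : ℝ} (hb : 0 < b) (hx : 0 < x) (hβ : β ≠ 0)
    (h : ℝ) : b ^ (β * h) * (x ^ (-(1 / β)) * b ^ (-h)) ^ β = x⁻¹ := by
  rw [Real.mul_rpow (Real.rpow_nonneg hx.le _) (Real.rpow_nonneg hb.le _),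
    ← Real.rpow_mul hx.le, ← Real.rpow_mul hb.le, mul_left_comm, ← Real.rpow_add hb,
    neg_mul, one_div, inv_mul_cancel₀ hβ, neg_mul, mul_comm h, add_neg_cancel,
    Real.rpow_zero, mul_one, Real.rpow_neg_one]

theorem pef_certification_conditioned_general {C Z : Type*} [Fintype C]
    [Fintype Z]
    (p : C × Z → ℝ) (hp0 : ∀ ω, 0 ≤ p ω)
    (α : ℝ) (hα : 1 < α)
    (F : C × Z → ℝ) (hF0 : ∀ ω, 0 ≤ F ω)
    (hF : ∑ c, ∑ z, (if 0 < ∑ c', p (c', z) then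
        F (c, z) * (p (c, z) / ∑ c', p (c', z)) ^ (α - 1) * p (c, z) else 0) ≤ 1)
    (h γ ε : ℝ) (hγ0 : 0 < γ) (hε0 : 0 < ε)
    (S : C × Z → Prop) (hSγ : γ ≤ prOf p S)
    (hSF : ∀ ω, S ω → (2 : ℝ) ^ ((α - 1) * h) ≤ F ω) :
    prOf p (fun ω => (0 < ∑ c', p (c', ω.2)) ∧
        (ε * γ) ^ (-(1 / (α - 1))) * (2 : ℝ) ^ (-h) < p ω / ∑ c', p (c', ω.2) ∧ S ω) /
      prOf p S ≤ ε := by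
  have hεγ : 0 < ε * γ := mul_pos hε0 hγ0
  have hPEF : IsPEF p α F := ⟨hF0, by rwa [Fintype.sum_prod_type]⟩
  have hmarkov := hPEF.mul_prOf_condProb_gt_le_one hp0 hα.le
    (t := (ε * γ) ^ (-(1 / (α - 1))) * 2 ^ (-h)) (by positivity) hSF
  rw [rpow_mul_mul_threshold_rpow two_pos hεγ (by linarith) h, inv_mul_le_iff₀ hεγ,
    mul_one] at hmarkov
  calc _ ≤ ε * γ / γ := div_le_div₀ hεγ.le hmarkov hγ0 hSγ
    _ = ε := mul_div_cancel_right₀ ε hγ0.ne'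

/-- Classical analog of Theorem 4.18 of Knill–Zhang–Bierhorst: if `F` is a PEF with
power `α > 1` for the distribution `p` on `C × Z`, and `S` is a success event of
probability at least `γ` on which `F ≥ 2^((α-1)h)`, then, conditioned on `S`, the
probability that `p(c|z) > (εγ)^(-1/(α-1)) · 2^(-h)` is at most `ε`. -/
theorem pef_certification_conditioned {C Z : Type*} [Fintype C] [Nonempty C]
    [Fintype Z] [Nonempty Z]
    (p : C × Z → ℝ) (hp0 : ∀ ω, 0 ≤ p ω) (hp1 : ∑ ω, p ω = 1)
    (α : ℝ) (hα : 1 < α)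
    (F : C × Z → ℝ) (hF0 : ∀ ω, 0 ≤ F ω)
    (hF : ∑ c, ∑ z, (if 0 < ∑ c', p (c', z) then
        F (c, z) * (p (c, z) / ∑ c', p (c', z)) ^ (α - 1) * p (c, z) else 0) ≤ 1)
    (h γ ε : ℝ) (hγ0 : 0 < γ) (hγ1 : γ ≤ 1) (hε0 : 0 < ε) (hε1 : ε ≤ 1)
    (S : C × Z → Prop) (hSγ : γ ≤ prOf p S)
    (hSF : ∀ ω, S ω → (2 : ℝ) ^ ((α - 1) * h) ≤ F ω) :
    prOf p (fun ω => (0 < ∑ c', p (c', ω.2)) ∧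
        (ε * γ) ^ (-(1 / (α - 1))) * (2 : ℝ) ^ (-h) < p ω / ∑ c', p (c', ω.2) ∧ S ω) /
      prOf p S ≤ ε :=
  pef_certification_conditioned_general p hp0 α hα F hF0 hF h γ ε hγ0 hε0 S hSγ hSF
end

section
/- Let C and Z be finite nonempty types, let α > 1, and let F : C×Z → ℝ≥0. Let p_1,…,p_K be finitely many probability distributions on C×Z, each with strictly positive input marginal (p_k(z) > 0 for all z and all k), and suppose F satisfies the PEF inequality Σ_{(c,z)} F(c,z)·p_k(c|z)^{α−1}·p_k(c,z) ≤ 1 for every k = 1,…,K. Then for every convex combination p = Σ_k λ_k p_k (λ_k ≥ 0, Σ_k λ_k = 1), F also satisfies Σ_{(c,z)} F(c,z)·p(c|z)^{α−1}·p(c,z) ≤ 1. -/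
/-!
The map `(a, b) ↦ (a / b) ^ (α - 1) * a = b * (a / b) ^ α` is the perspective of the convex
function `x ↦ x ^ α`, hence jointly convex on `a ≥ 0`, `b > 0`: Jensen's inequality with weights
`λₖ bₖ / ∑ λ b` at the points `aₖ / bₖ` shows this. At each outcome `(c, z)` take
`aₖ = Pₖ(c, z)` and `bₖ = Pₖ(z)`; since the input marginal of the mixture is the mixture of the
marginals, the PEF sum of the mixture is at most the `λ`-average of the PEF sums of the `Pₖ`,
each of which is at most `1`.
-/

open Finset

theorem Real.rpow_sub_one_mul_self {x α : ℝ} (hx : 0 ≤ x) (hα : α ≠ 0) :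
    x ^ (α - 1) * x = x ^ α := by
  rw [← Real.rpow_add_one' hx (by simpa using hα), sub_add_cancel]

theorem Real.div_rpow_sub_one_mul {a b α : ℝ} (ha : 0 ≤ a) (hb : 0 < b) (hα : α ≠ 0) :
    (a / b) ^ (α - 1) * a = (a / b) ^ α * b := by
  rw [← Real.rpow_sub_one_mul_self (div_nonneg ha hb.le) hα, mul_assoc, div_mul_cancel₀ a hb.ne']

theorem Real.div_rpow_sub_one_mul_weighted_sum_le {ι : Type*} (s : Finset ι) {α : ℝ} (hα : 1 ≤ α)
    {w a b : ι → ℝ} (hw : ∀ i ∈ s, 0 ≤ w i) (hw1 : ∑ i ∈ s, w i = 1)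
    (ha : ∀ i ∈ s, 0 ≤ a i) (hb : ∀ i ∈ s, 0 < b i) :
    ((∑ i ∈ s, w i * a i) / ∑ i ∈ s, w i * b i) ^ (α - 1) * ∑ i ∈ s, w i * a i ≤
      ∑ i ∈ s, w i * ((a i / b i) ^ (α - 1) * a i) := by
  have hα0 : α ≠ 0 := by linarith
  set A := ∑ i ∈ s, w i * a i
  set B := ∑ i ∈ s, w i * b i
  have hA : 0 ≤ A := sum_nonneg fun i hi => mul_nonneg (hw i hi) (ha i hi)
  have hB : 0 < B := by
    obtain ⟨j, hj, hwj⟩ := (sum_pos_iff_of_nonneg hw).1 (hw1 ▸ one_pos)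
    exact sum_pos' (fun i hi => mul_nonneg (hw i hi) (hb i hi).le)
      ⟨j, hj, mul_pos hwj (hb j hj)⟩
  have jensen := Real.rpow_arith_mean_le_arith_mean_rpow s (fun i => w i * b i / B)
    (fun i => a i / b i) (fun i hi => by have := hw i hi; have := hb i hi; positivity)
    (by rw [← sum_div, div_self hB.ne']) (fun i hi => div_nonneg (ha i hi) (hb i hi).le) hα
  have hmean : ∑ i ∈ s, w i * b i / B * (a i / b i) = A / B := by
    rw [sum_div]
    refine sum_congr rfl fun i hi => ?_
    field_simp [(hb i hi).ne']
  rw [hmean] at jensen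
  calc (A / B) ^ (α - 1) * A = (A / B) ^ α * B := Real.div_rpow_sub_one_mul hA hB hα0
    _ ≤ (∑ i ∈ s, w i * b i / B * (a i / b i) ^ α) * B := by gcongr
    _ = ∑ i ∈ s, w i * ((a i / b i) ^ (α - 1) * a i) := by
      rw [sum_mul]
      refine sum_congr rfl fun i hi => ?_
      rw [Real.div_rpow_sub_one_mul (ha i hi) (hb i hi) hα0]
      field_simp

theorem pef_convex_combination_general {C Z : Type*} [Fintype C]
    [Fintype Z]
    (α : ℝ) (hα : 1 < α)
    (F : C × Z → ℝ) (hF0 : ∀ ω, 0 ≤ F ω)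
    (K : ℕ)
    (P : Fin K → C × Z → ℝ)
    (hP0 : ∀ k ω, 0 ≤ P k ω)
    (hPz : ∀ k z, 0 < ∑ c, P k (c, z))
    (hPEF : ∀ k,
      ∑ c, ∑ z, F (c, z) * (P k (c, z) / ∑ c', P k (c', z)) ^ (α - 1) * P k (c, z) ≤ 1)
    (lam : Fin K → ℝ) (hlam0 : ∀ k, 0 ≤ lam k) (hlam1 : ∑ k, lam k = 1) :
    ∑ c, ∑ z, F (c, z) *
        ((∑ k, lam k * P k (c, z)) / ∑ c', ∑ k, lam k * P k (c', z)) ^ (α - 1) *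
        (∑ k, lam k * P k (c, z)) ≤ 1 := by
  have pointwise : ∀ c z, F (c, z) *
      ((∑ k, lam k * P k (c, z)) / ∑ c', ∑ k, lam k * P k (c', z)) ^ (α - 1) *
        (∑ k, lam k * P k (c, z)) ≤
      ∑ k, lam k * (F (c, z) * (P k (c, z) / ∑ c', P k (c', z)) ^ (α - 1) * P k (c, z)) := by
    intro c z
    have marginal : ∑ c', ∑ k, lam k * P k (c', z) = ∑ k, lam k * ∑ c', P k (c', z) := by
      simp_rw [mul_sum]
      exact sum_comm
    rw [marginal, mul_assoc]
    calc _ ≤ F (c, z) * ∑ k, lam k * ((P k (c, z) / ∑ c', P k (c', z)) ^ (α - 1) * P k (c, z)) :=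
          mul_le_mul_of_nonneg_left (Real.div_rpow_sub_one_mul_weighted_sum_le univ hα.le
            (fun k _ => hlam0 k) hlam1 (fun k _ => hP0 k (c, z)) (fun k _ => hPz k z)) (hF0 (c, z))
      _ = _ := by
        rw [mul_sum]
        exact sum_congr rfl fun k _ => by ring
  calc _ ≤ ∑ c, ∑ z, ∑ k, lam k *
        (F (c, z) * (P k (c, z) / ∑ c', P k (c', z)) ^ (α - 1) * P k (c, z)) :=
        sum_le_sum fun c _ => sum_le_sum fun z _ => pointwise c z
    _ = ∑ k, lam k * ∑ c, ∑ z,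
        F (c, z) * (P k (c, z) / ∑ c', P k (c', z)) ^ (α - 1) * P k (c, z) := by
        simp_rw [mul_sum]
        exact (sum_congr rfl fun c _ => sum_comm).trans sum_comm
    _ ≤ ∑ k, lam k * 1 := sum_le_sum fun k _ => mul_le_mul_of_nonneg_left (hPEF k) (hlam0 k)
    _ = 1 := by simp only [mul_one, hlam1]

/-- Convexity of the probability-estimation-factor property: if `F` is a PEF with
power `α > 1` for each of the finitely many probability distributions `P_1, …, P_K`
on `C × Z`, each with strictly positive input marginal, then `F` is a PEF with
power `α` for every convex combination of them.  Here `p(c|z) = p(c,z) / p(z)`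
with `p(z) = ∑ c, p(c,z)`. -/
theorem pef_convex_combination {C Z : Type*} [Fintype C] [Nonempty C]
    [Fintype Z] [Nonempty Z]
    (α : ℝ) (hα : 1 < α)
    (F : C × Z → ℝ) (hF0 : ∀ ω, 0 ≤ F ω)
    (K : ℕ) (hK : 1 ≤ K)
    (P : Fin K → C × Z → ℝ)
    (hP0 : ∀ k ω, 0 ≤ P k ω) (hP1 : ∀ k, ∑ ω, P k ω = 1)
    (hPz : ∀ k z, 0 < ∑ c, P k (c, z))
    (hPEF : ∀ k,
      ∑ c, ∑ z, F (c, z) * (P k (c, z) / ∑ c', P k (c', z)) ^ (α - 1) * P k (c, z) ≤ 1)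
    (lam : Fin K → ℝ) (hlam0 : ∀ k, 0 ≤ lam k) (hlam1 : ∑ k, lam k = 1) :
    ∑ c, ∑ z, F (c, z) *
        ((∑ k, lam k * P k (c, z)) / ∑ c', ∑ k, lam k * P k (c', z)) ^ (α - 1) *
        (∑ k, lam k * P k (c, z)) ≤ 1 :=
  pef_convex_combination_general α hα F hF0 K P hP0 hPz hPEF lam hlam0 hlam1
end

section
/- Let α ≥ 1 be real, let φ ∈ (0, π/2], let ψ ∈ [0, φ], and let f_1, f_2 ≥ 0 be real numbers. Then (sin(φ−ψ) + sin ψ)^{α−1} · (sin(φ−ψ)·f_1 + sin ψ·f_2) / (sin φ)^α ≤ (φ / sin φ)^α · max(f_1, f_2). -/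
open Real

/-! Both sines are nonnegative and `sin x ≤ x`, so `s := sin (φ - ψ) + sin ψ` lies in `[0, φ]`.
The weighted sum is at most `s * max f₁ f₂`, which turns the left side into
`(s / sin φ) ^ α * max f₁ f₂`, and `s ≤ φ` finishes by monotonicity of `x ↦ x ^ α`. -/

lemma mul_add_mul_le_add_mul_max {R : Type*} [Semiring R] [LinearOrder R] [IsOrderedRing R]
    {a b : R} (ha : 0 ≤ a) (hb : 0 ≤ b) (x y : R) :
    a * x + b * y ≤ (a + b) * max x y := by
  rw [add_mul]
  gcongr
  exacts [le_max_left x y, le_max_right x y]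

lemma sin_sub_add_sin_le {φ ψ : ℝ} (hψ0 : 0 ≤ ψ) (hψφ : ψ ≤ φ) : sin (φ - ψ) + sin ψ ≤ φ := by
  linarith [sin_le (sub_nonneg.mpr hψφ), sin_le hψ0]

lemma rpow_sub_one_mul_mul_div_rpow {s c : ℝ} (hs : 0 ≤ s) (hc : 0 ≤ c) {α : ℝ} (hα : α ≠ 0)
    (m : ℝ) : s ^ (α - 1) * (s * m) / c ^ α = (s / c) ^ α * m := by
  have hpow : s ^ (α - 1) * s = s ^ α := by
    rw [← rpow_add_one' hs (by simpa using hα), sub_add_cancel]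
  rw [div_rpow hs hc, ← mul_assoc, hpow]
  ring

theorem chord_bound_max_general (α : ℝ) (hα : 1 ≤ α) (φ : ℝ) (hφ0 : 0 < φ) (hφ : φ ≤ π / 2)
    (ψ : ℝ) (hψ0 : 0 ≤ ψ) (hψφ : ψ ≤ φ) (f₁ f₂ : ℝ) (hf₁ : 0 ≤ f₁) :
    (Real.sin (φ - ψ) + Real.sin ψ) ^ (α - 1) *
        (Real.sin (φ - ψ) * f₁ + Real.sin ψ * f₂) / Real.sin φ ^ α ≤
      (φ / Real.sin φ) ^ α * max f₁ f₂ := by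
  have hφπ : φ < π := by linarith [pi_pos]
  have hsinφ : 0 < sin φ := sin_pos_of_pos_of_lt_pi hφ0 hφπ
  have hsin₁ : 0 ≤ sin (φ - ψ) := sin_nonneg_of_nonneg_of_le_pi (by linarith) (by linarith)
  have hsin₂ : 0 ≤ sin ψ := sin_nonneg_of_nonneg_of_le_pi hψ0 (by linarith)
  have hmax : 0 ≤ max f₁ f₂ := le_max_of_le_left hf₁
  calc (sin (φ - ψ) + sin ψ) ^ (α - 1) * (sin (φ - ψ) * f₁ + sin ψ * f₂) / sin φ ^ α
      ≤ (sin (φ - ψ) + sin ψ) ^ (α - 1) * ((sin (φ - ψ) + sin ψ) * max f₁ f₂) / sin φ ^ α := by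
        gcongr
        exact mul_add_mul_le_add_mul_max hsin₁ hsin₂ f₁ f₂
    _ = ((sin (φ - ψ) + sin ψ) / sin φ) ^ α * max f₁ f₂ :=
        rpow_sub_one_mul_mul_div_rpow (add_nonneg hsin₁ hsin₂) hsinφ.le (by linarith) _
    _ ≤ (φ / sin φ) ^ α * max f₁ f₂ := by
        gcongr
        exact sin_sub_add_sin_le hψ0 hψφ

/-- Second inequality of Lemma 8.3 of Knill–Zhang–Bierhorst: for `α ≥ 1`,
`φ ∈ (0, π/2]`, `ψ ∈ [0, φ]` and nonnegative reals `f₁, f₂`,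
`(sin(φ-ψ) + sin ψ)^(α-1) * (sin(φ-ψ) * f₁ + sin ψ * f₂) / (sin φ)^α
  ≤ (φ / sin φ)^α * max f₁ f₂`. -/
theorem chord_bound_max (α : ℝ) (hα : 1 ≤ α) (φ : ℝ) (hφ0 : 0 < φ) (hφ : φ ≤ π / 2)
    (ψ : ℝ) (hψ0 : 0 ≤ ψ) (hψφ : ψ ≤ φ) (f₁ f₂ : ℝ) (hf₁ : 0 ≤ f₁) (hf₂ : 0 ≤ f₂) :
    (Real.sin (φ - ψ) + Real.sin ψ) ^ (α - 1) *
        (Real.sin (φ - ψ) * f₁ + Real.sin ψ * f₂) / Real.sin φ ^ α ≤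
      (φ / Real.sin φ) ^ α * max f₁ f₂ :=
  chord_bound_max_general α hα φ hφ0 hφ ψ hψ0 hψφ f₁ f₂ hf₁
end
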